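/- Let a, b, c, w be real numbers with a·b = c² and a + 3b ≠ 0. Set p := a − 3b, q := c, D := p² + 12q², u₁ := −4q²·w/D, u₂ := p·q·w/D. Then D = (a + 3b)² (in particular D ≠ 0), and both 7·u₁² + 8·u₂² + w² and (w − u₁)² are equal to ((a² + 9b² + 10c²)² / (a + 3b)⁴)·w². -/

import Mathlib

/-! Writing `s = a + 3b`, the constraint `ab = c²` turns `(a - 3b)² + 12c²` into `s²` and
`a² + 9b² + 10c²` into `s² + 4c²`. Both quantities are then `((s² + 4c²) / s²)² w²`: for
`(w - u₁)²` directly, and for `7u₁² + 8u₂² + w²` after substituting `(a - 3b)² = s² - 12c²`. -/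

section

variable {K : Type*} [Field K]

theorem sub_three_mul_sq_add_twelve_mul_sq_eq {a b c : K} (h : a * b = c ^ 2) :
    (a - 3 * b) ^ 2 + 12 * c ^ 2 = (a + 3 * b) ^ 2 := by
  linear_combination (-12) * h

theorem sq_add_nine_mul_sq_add_ten_mul_sq_eq {a b c : K} (h : a * b = c ^ 2) :
    a ^ 2 + 9 * b ^ 2 + 10 * c ^ 2 = (a + 3 * b) ^ 2 + 4 * c ^ 2 := by
  linear_combination (-6) * h

theorem seven_mul_sq_add_eight_mul_sq_add_sq_eq {p q s w : K} (hs : s ≠ 0)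
    (hpq : p ^ 2 + 12 * q ^ 2 = s ^ 2) :
    7 * (-4 * q ^ 2 * w / s ^ 2) ^ 2 + 8 * (p * q * w / s ^ 2) ^ 2 + w ^ 2
      = (s ^ 2 + 4 * q ^ 2) ^ 2 / s ^ 4 * w ^ 2 := by
  field_simp
  linear_combination 8 * q ^ 2 * w ^ 2 * hpq

theorem sub_neg_four_mul_sq_div_sq_eq {q s w : K} (hs : s ≠ 0) :
    (w - (-4 * q ^ 2 * w / s ^ 2)) ^ 2 = (s ^ 2 + 4 * q ^ 2) ^ 2 / s ^ 4 * w ^ 2 := by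
  field_simp
  ring

end

/-- Explicit limit computation in the classification of Lagrangian translators:
if a·b = c² and a + 3b ≠ 0, then with p := a − 3b, q := c, D := p² + 12q²,
u₁ := −4q²·w/D, u₂ := p·q·w/D, one has D = (a + 3b)², and both
7u₁² + 8u₂² + w² and (w − u₁)² equal ((a² + 9b² + 10c²)²/(a + 3b)⁴)·w². -/
theorem translator_limit_computation (a b c w : ℝ)
    (habc : a * b = c ^ 2) (hab : a + 3 * b ≠ 0) :
    (a - 3 * b) ^ 2 + 12 * c ^ 2 = (a + 3 * b) ^ 2 ∧
    7 * (-4 * c ^ 2 * w / ((a - 3 * b) ^ 2 + 12 * c ^ 2)) ^ 2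
      + 8 * ((a - 3 * b) * c * w / ((a - 3 * b) ^ 2 + 12 * c ^ 2)) ^ 2
      + w ^ 2
      = ((a ^ 2 + 9 * b ^ 2 + 10 * c ^ 2) ^ 2 / (a + 3 * b) ^ 4) * w ^ 2 ∧
    (w - (-4 * c ^ 2 * w / ((a - 3 * b) ^ 2 + 12 * c ^ 2))) ^ 2
      = ((a ^ 2 + 9 * b ^ 2 + 10 * c ^ 2) ^ 2 / (a + 3 * b) ^ 4) * w ^ 2 := by
  have hD := sub_three_mul_sq_add_twelve_mul_sq_eq habc
  refine ⟨hD, ?_, ?_⟩ <;> rw [hD, sq_add_nine_mul_sq_add_ten_mul_sq_eq habc]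
  · exact seven_mul_sq_add_eight_mul_sq_add_sq_eq hab hD
  · exact sub_neg_four_mul_sq_div_sq_eq hab
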